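/- Let k ≥ 2 be a power of 2, let n, m be positive integers, and let p ∈ (0,1] satisfy m > 7k, p·k > (7/m)^(k/2 − 1), m·p^(log k) > 30, and p < 1/30. Then k·n·(1 + Σ_{d=1}^{log k} (n·p)^(2^d − 1)/2^d)·(1 − p)^(k−1)·(1 − 35/(m·p^(log k)))^(k−1) ≤ E[Λ] ≤ k·n·(1 + Σ_{d=1}^{log k} (n·p)^(2^d − 1)/2^d)·(1 + p)^(k−1)·(1 + 35/(m·p^(log k)))^(k−1). -/

import Mathlib

/-- `⟨s⟩`: the set of integers `{-⌊s/2⌋, …, ⌊s/2⌋}`. -/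
noncomputable def intRange (s : ℝ) : Finset ℤ := Finset.Icc (-⌊s / 2⌋) ⌊s / 2⌋

/-- The global index (0-based) of the `r`-th element of the `i`-th block of size `2^d`. -/
def blockIdx {κ : ℕ} (d : ℕ) (hd : d ≤ κ) (i : Fin (2 ^ (κ - d))) (r : Fin (2 ^ d)) :
    Fin (2 ^ κ) :=
  ⟨(i : ℕ) * 2 ^ d + (r : ℕ), by
    have hr := r.isLt
    have hi : (i : ℕ) + 1 ≤ 2 ^ (κ - d) := i.isLt
    have h1 : ((i : ℕ) + 1) * 2 ^ d ≤ 2 ^ (κ - d) * 2 ^ d := Nat.mul_le_mul hi (le_refl _)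
    have h2 : 2 ^ (κ - d) * 2 ^ d = 2 ^ κ := by rw [← pow_add, Nat.sub_add_cancel hd]
    have h3 : ((i : ℕ) + 1) * 2 ^ d = (i : ℕ) * 2 ^ d + 2 ^ d := by ring
    omega⟩

/-- `Λ_{d,i}`: the number of index tuples for the `i`-th block of `2^d` input lists all of
whose partial block sums at levels `t ∈ {1,…,d}` pass the corresponding filters `⟨m·p^t⟩`;
this is the size of the `i`-th list at level `d` of the k-Tree algorithm. -/
noncomputable def levelListSize (κ n m : ℕ) (p : ℝ) (L : Fin (2 ^ κ) → Fin n → ℤ)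
    (d : ℕ) (hd : d ≤ κ) (i : Fin (2 ^ (κ - d))) : ℕ :=
  Nat.card {ℓ : Fin (2 ^ d) → Fin n //
    ∀ t ∈ Finset.Icc 1 d, ∀ j < 2 ^ (d - t),
      (∑ r : Fin (2 ^ d),
          if j * 2 ^ t ≤ (r : ℕ) ∧ (r : ℕ) < (j + 1) * 2 ^ t
          then L (blockIdx d hd i r) (ℓ r) else 0)
        ∈ intRange ((m : ℝ) * p ^ t)}

/-- `Λ`: the total size of all the lists arising in the run of the k-Tree algorithm. -/
noncomputable def totalSize (κ n m : ℕ) (p : ℝ) (L : Fin (2 ^ κ) → Fin n → ℤ) : ℕ :=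
  ∑ d ∈ (Finset.range (κ + 1)).attach,
    ∑ i : Fin (2 ^ (κ - (d : ℕ))),
      levelListSize κ n m p L (d : ℕ) (Nat.lt_succ_iff.mp (Finset.mem_range.mp d.property)) i

/-- The expectation of `Λ` over the uniformly random choice of the `2^κ` input lists of `n`
entries each from `⟨m⟩`. -/
noncomputable def expTotalSize (κ n m : ℕ) (p : ℝ) : ℝ :=
  (∑ L : Fin (2 ^ κ) → Fin n → ↥(intRange (m : ℝ)),
      (totalSize κ n m p (fun i j => (L i j : ℤ)) : ℝ)) /
    (Fintype.card (Fin (2 ^ κ) → Fin n → ↥(intRange (m : ℝ))) : ℝ)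

/-!
By linearity of expectation, a fixed index tuple at level `d` reads `2^d` distinct, hence
independent uniform, entries of `⟨m⟩`, so `E[Λ] = ∑_d 2^(κ-d) n^(2^d) π_d` with `π_d` the
probability that `2^d` independent uniform entries pass all filters of levels `1, …, d`.

Counting the passing tuples by their total sum `z`, the two halves of a tuple pass
independently, so the counts obey the convolution recursion
`G_{d+1}(z) = ∑_{a ∈ ⟨m p^d⟩} G_d(a) G_d(z - a)` for `z ∈ ⟨m p^(d+1)⟩`. As `⟨m p^(d+1)⟩` is only
a `p`-fraction of `⟨m p^d⟩`, all but a `p/2`-fraction of the summands are nonzero, so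
`G_{d+1} ≈ m p^d G_d²` up to factors `1 - p/2 - 1/X` and `1 + 1/X` per level, where
`X = m p^κ ≤ m p^d` controls the rounding in `⟨·⟩`. Solving the recursion gives
`π_d = p^(2^d - 1)` up to such factors raised to the power `2^d ≤ 2 (k - 1)`, and
elementary inequalities turn them into `(1 ± p)^(k-1) (1 ± 35/X)^(k-1)`.
-/

open Finset
open scoped BigOperators

lemma Fintype.expect_comp_of_injective {ι β α M : Type*} [Fintype ι] [DecidableEq ι]
    [Fintype β] [DecidableEq β] [Fintype α] [Nonempty α] [AddCommMonoid M] [Module ℚ≥0 M]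
    {e : ι → β} (he : Function.Injective e) (g : (ι → α) → M) :
    𝔼 f : β → α, g (f ∘ e) = 𝔼 x : ι → α, g x := by
  classical
  let E : (β → α) ≃ (ι → α) × ({b // b ∉ Set.range e} → α) :=
    (Equiv.piEquivPiSubtypeProd (· ∈ Set.range e) fun _ => α).trans
      (Equiv.prodCongr ((Equiv.ofInjective e he).arrowCongr (Equiv.refl α)).symm (Equiv.refl _))
  rw [Fintype.expect_equiv E (fun f => g (f ∘ e)) (fun y => g y.1) (fun f => rfl),
    ← univ_product_univ, expect_product]
  simp only [Fintype.expect_const]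

lemma card_filter_add_eq_sum_mul {A B G : Type*} [AddCommGroup G] [DecidableEq G]
    {s : Finset A} {t : Finset B} {f : A → G} {g : B → G} {u : Finset G}
    (hs : ∀ x ∈ s, f x ∈ u) (z : G) :
    #{q ∈ s ×ˢ t | f q.1 + g q.2 = z} = ∑ a ∈ u, #{x ∈ s | f x = a} * #{y ∈ t | g y = z - a} := by
  rw [card_eq_sum_card_fiberwise (f := fun q => f q.1) (t := u)
    fun q hq => hs _ (mem_product.1 (mem_filter.1 hq).1).1]
  refine sum_congr rfl fun a _ => ?_
  rw [← card_product, filter_filter]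
  congr 1
  ext ⟨x, y⟩
  simp only [mem_filter, mem_product]
  constructor
  · rintro ⟨⟨hx, hy⟩, hsum, rfl⟩
    exact ⟨⟨hx, rfl⟩, hy, eq_sub_of_add_eq' hsum⟩
  · rintro ⟨⟨hx, rfl⟩, hy, hg⟩
    exact ⟨⟨hx, hy⟩, by rw [hg, add_sub_cancel], rfl⟩

lemma sum_mul_sub_le {s : Finset ℤ} {f : ℤ → ℝ} {B : ℝ} (hf0 : ∀ a, 0 ≤ f a)
    (hB : ∀ a ∈ s, f a ≤ B) (hsupp : ∀ a ∉ s, f a = 0) (z : ℤ) :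
    ∑ a ∈ s, f a * f (z - a) ≤ #s * B ^ 2 := by
  rw [← nsmul_eq_mul]
  refine sum_le_card_nsmul _ _ _ fun a ha => ?_
  by_cases hza : z - a ∈ s
  · rw [sq]
    exact mul_le_mul (hB a ha) (hB _ hza) (hf0 _) ((hf0 a).trans (hB a ha))
  · rw [hsupp _ hza, mul_zero]
    positivity

lemma le_sum_mul_sub {s : Finset ℤ} {f : ℤ → ℝ} {B : ℝ} (hf0 : ∀ a, 0 ≤ f a) (hB0 : 0 ≤ B)
    (hB : ∀ a ∈ s, B ≤ f a) (z : ℤ) :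
    #{a ∈ s | z - a ∈ s} * B ^ 2 ≤ ∑ a ∈ s, f a * f (z - a) := by
  rw [← nsmul_eq_mul]
  calc #{a ∈ s | z - a ∈ s} • B ^ 2 ≤ ∑ a ∈ s with z - a ∈ s, f a * f (z - a) := by
        refine card_nsmul_le_sum _ _ _ fun a ha => ?_
        rw [mem_filter] at ha
        rw [sq]
        exact mul_le_mul (hB a ha.1) (hB _ ha.2) hB0 (hf0 a)
    _ ≤ ∑ a ∈ s, f a * f (z - a) :=
        sum_le_sum_of_subset_of_nonneg (filter_subset _ _)
          fun a _ _ => mul_nonneg (hf0 _) (hf0 _)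

section IntRange

lemma card_intRange {s : ℝ} (hs : 0 ≤ s) : (#(intRange s) : ℝ) = 2 * ⌊s / 2⌋ + 1 := by
  have : 0 ≤ ⌊s / 2⌋ := Int.floor_nonneg.2 (by positivity)
  have h : ((#(intRange s) : ℕ) : ℤ) = 2 * ⌊s / 2⌋ + 1 := by
    rw [intRange, Int.card_Icc]
    omega
  exact_mod_cast h

lemma card_intRange_le {s : ℝ} (hs : 0 ≤ s) : (#(intRange s) : ℝ) ≤ s + 1 := by
  rw [card_intRange hs]
  linarith [Int.floor_le (s / 2)]

lemma lt_card_intRange {s : ℝ} (hs : 0 ≤ s) : s - 1 < #(intRange s) := by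
  rw [card_intRange hs]
  linarith [Int.sub_one_lt_floor (s / 2)]

lemma le_card_intRange (m : ℕ) : m ≤ #(intRange m) := by
  have h : (m : ℝ) < #(intRange m) + 1 := by linarith [lt_card_intRange m.cast_nonneg]
  exact Nat.lt_succ_iff.1 (by exact_mod_cast h)

lemma zero_mem_intRange {s : ℝ} (hs : 0 ≤ s) : 0 ∈ intRange s := by
  have : 0 ≤ ⌊s / 2⌋ := Int.floor_nonneg.2 (by positivity)
  simp only [intRange, mem_Icc]
  omega

lemma lt_card_filter_sub_mem_intRange {s s' : ℝ} (hs' : s' ≤ s) {z : ℤ}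
    (hz : z ∈ intRange s') :
    s - 1 - s' / 2 < #{a ∈ intRange s | z - a ∈ intRange s} := by
  have hfilter : {a ∈ intRange s | z - a ∈ intRange s} =
      Icc (max (-⌊s / 2⌋) (z - ⌊s / 2⌋)) (min ⌊s / 2⌋ (z + ⌊s / 2⌋)) := by
    ext a
    simp only [intRange, mem_filter, mem_Icc, max_le_iff, le_min_iff]
    omega
  have hF : ⌊s' / 2⌋ ≤ ⌊s / 2⌋ := Int.floor_le_floor (by linarith)
  have hcard : 2 * ⌊s / 2⌋ + 1 - ⌊s' / 2⌋ ≤ ((#{a ∈ intRange s | z - a ∈ intRange s} : ℕ) : ℤ) := by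
    rw [intRange, mem_Icc] at hz
    rw [hfilter, Int.card_Icc]
    omega
  have hcard' : 2 * (⌊s / 2⌋ : ℝ) + 1 - ⌊s' / 2⌋ ≤ #{a ∈ intRange s | z - a ∈ intRange s} := by
    exact_mod_cast hcard
  linarith [Int.floor_le (s' / 2), Int.sub_one_lt_floor (s / 2)]

end IntRange

section Filters

variable (m : ℕ) (p : ℝ)

def blockSum {N : ℕ} (x : Fin N → ℤ) (t j : ℕ) : ℤ :=
  ∑ r : Fin N, if j * 2 ^ t ≤ (r : ℕ) ∧ (r : ℕ) < (j + 1) * 2 ^ t then x r else 0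

def PassesFilters (d : ℕ) (x : Fin (2 ^ d) → ℤ) : Prop :=
  ∀ t ∈ Icc 1 d, ∀ j < 2 ^ (d - t), blockSum x t j ∈ intRange (m * p ^ t)

lemma levelListSize_eq (κ n : ℕ) (L : Fin (2 ^ κ) → Fin n → ℤ) (d : ℕ) (hd : d ≤ κ)
    (i : Fin (2 ^ (κ - d))) :
    levelListSize κ n m p L d hd i = Nat.card {ℓ : Fin (2 ^ d) → Fin n //
      PassesFilters m p d fun r => L (blockIdx d hd i r) (ℓ r)} :=
  rfl

def halvesEquiv (d : ℕ) : Fin (2 ^ d) ⊕ Fin (2 ^ d) ≃ Fin (2 ^ (d + 1)) :=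
  finSumFinEquiv.trans (finCongr (by rw [pow_succ]; omega))

@[simp] lemma halvesEquiv_inl (d : ℕ) (r : Fin (2 ^ d)) : (halvesEquiv d (.inl r) : ℕ) = r := by
  simp [halvesEquiv]

@[simp] lemma halvesEquiv_inr (d : ℕ) (r : Fin (2 ^ d)) :
    (halvesEquiv d (.inr r) : ℕ) = 2 ^ d + r := by
  simp [halvesEquiv, add_comm]

variable {m p}

lemma sum_halvesEquiv {M : Type*} [AddCommMonoid M] (d : ℕ) (x : Fin (2 ^ (d + 1)) → M) :
    ∑ r, x r = ∑ r, x (halvesEquiv d (.inl r)) + ∑ r, x (halvesEquiv d (.inr r)) := by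
  rw [← (halvesEquiv d).sum_comp, Fintype.sum_sum_type]

lemma blockSum_halvesEquiv (d : ℕ) (x : Fin (2 ^ (d + 1)) → ℤ) (t j : ℕ) :
    blockSum x t j =
      (∑ r : Fin (2 ^ d), if j * 2 ^ t ≤ (r : ℕ) ∧ (r : ℕ) < (j + 1) * 2 ^ t
        then x (halvesEquiv d (.inl r)) else 0) +
      ∑ r : Fin (2 ^ d), if j * 2 ^ t ≤ 2 ^ d + (r : ℕ) ∧ 2 ^ d + (r : ℕ) < (j + 1) * 2 ^ t
        then x (halvesEquiv d (.inr r)) else 0 := by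
  simp only [blockSum, sum_halvesEquiv d, halvesEquiv_inl, halvesEquiv_inr]

lemma blockSum_left (d : ℕ) (x : Fin (2 ^ (d + 1)) → ℤ) {t j : ℕ} (ht : t ≤ d)
    (hj : j < 2 ^ (d - t)) :
    blockSum x t j = blockSum (fun r => x (halvesEquiv d (.inl r))) t j := by
  have hend : (j + 1) * 2 ^ t ≤ 2 ^ d := by
    calc (j + 1) * 2 ^ t ≤ 2 ^ (d - t) * 2 ^ t := Nat.mul_le_mul_right _ hj
      _ = 2 ^ d := by rw [← pow_add, Nat.sub_add_cancel ht]
  rw [blockSum_halvesEquiv, add_eq_left.2 (sum_eq_zero fun r _ => if_neg (by omega))]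
  rfl

lemma blockSum_right (d : ℕ) (x : Fin (2 ^ (d + 1)) → ℤ) {t j : ℕ} (ht : t ≤ d) :
    blockSum x t (2 ^ (d - t) + j) = blockSum (fun r => x (halvesEquiv d (.inr r))) t j := by
  have hshift : 2 ^ (d - t) * 2 ^ t = 2 ^ d := by rw [← pow_add, Nat.sub_add_cancel ht]
  rw [blockSum_halvesEquiv, add_eq_right.2 (sum_eq_zero fun r _ => if_neg ?_)]
  · refine sum_congr rfl fun r _ => if_congr ?_ rfl rfl
    simp only [add_mul, hshift]
    omega
  · have := r.isLt
    simp only [add_mul, hshift]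
    omega

lemma blockSum_zero {t : ℕ} (x : Fin (2 ^ t) → ℤ) : blockSum x t 0 = ∑ r, x r :=
  sum_congr rfl fun r _ => if_pos ⟨by simp, by simp⟩

lemma passesFilters_zero (x : Fin (2 ^ 0) → ℤ) : PassesFilters m p 0 x := by
  simp [PassesFilters]

lemma passesFilters_succ_iff (d : ℕ) (x : Fin (2 ^ (d + 1)) → ℤ) :
    PassesFilters m p (d + 1) x ↔
      PassesFilters m p d (fun r => x (halvesEquiv d (.inl r))) ∧
      PassesFilters m p d (fun r => x (halvesEquiv d (.inr r))) ∧
      ∑ r, x r ∈ intRange (m * p ^ (d + 1)) := by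
  simp only [PassesFilters, mem_Icc]
  constructor
  · intro h
    refine ⟨fun t ht j hj => ?_, fun t ht j hj => ?_, ?_⟩
    · rw [← blockSum_left d x ht.2 hj]
      exact h t ⟨ht.1, by omega⟩ j (hj.trans_le (Nat.pow_le_pow_right two_pos (by omega)))
    · rw [← blockSum_right d x ht.2]
      have : 2 ^ (d + 1 - t) = 2 * 2 ^ (d - t) := by rw [← pow_succ']; congr 1; omega
      exact h t ⟨ht.1, by omega⟩ _ (by omega)
    · simpa [blockSum_zero] using h (d + 1) ⟨by omega, le_rfl⟩ 0 (by simp)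
  · rintro ⟨hl, hr, hsum⟩ t ht j hj
    obtain htd | rfl : t ≤ d ∨ t = d + 1 := by omega
    · have : 2 ^ (d + 1 - t) = 2 * 2 ^ (d - t) := by rw [← pow_succ']; congr 1; omega
      obtain hjl | hjr := lt_or_ge j (2 ^ (d - t))
      · rw [blockSum_left d x htd hjl]
        exact hl t ⟨ht.1, htd⟩ j hjl
      · obtain ⟨j, rfl⟩ := Nat.exists_eq_add_of_le hjr
        rw [blockSum_right d x htd]
        exact hr t ⟨ht.1, htd⟩ j (by omega)
    · obtain rfl : j = 0 := by simpa using hj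
      rwa [blockSum_zero]

lemma sum_mem_intRange_of_passesFilters {d : ℕ} {x : Fin (2 ^ d) → intRange (m : ℝ)}
    (hx : PassesFilters m p d fun r => x r) : ∑ r, (x r : ℤ) ∈ intRange (m * p ^ d) := by
  cases d with
  | zero => simp
  | succ d => exact ((passesFilters_succ_iff d _).1 hx).2.2

end Filters

section Counting

variable (m : ℕ) (p : ℝ)

open scoped Classical in
noncomputable def passingTuples (d : ℕ) : Finset (Fin (2 ^ d) → intRange (m : ℝ)) :=
  {x | PassesFilters m p d fun r => x r}

noncomputable def passCount (d : ℕ) (z : ℤ) : ℕ :=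
  #{x ∈ passingTuples m p d | ∑ r, (x r : ℤ) = z}

def halvesArrowEquiv (α : Type*) (d : ℕ) :
    (Fin (2 ^ (d + 1)) → α) ≃ (Fin (2 ^ d) → α) × (Fin (2 ^ d) → α) :=
  ((halvesEquiv d).symm.arrowCongr (Equiv.refl α)).trans (Equiv.sumArrowEquivProdArrow _ _ _)

@[simp] lemma halvesArrowEquiv_fst {α : Type*} (d : ℕ) (x : Fin (2 ^ (d + 1)) → α)
    (r : Fin (2 ^ d)) : (halvesArrowEquiv α d x).1 r = x (halvesEquiv d (.inl r)) := rfl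

@[simp] lemma halvesArrowEquiv_snd {α : Type*} (d : ℕ) (x : Fin (2 ^ (d + 1)) → α)
    (r : Fin (2 ^ d)) : (halvesArrowEquiv α d x).2 r = x (halvesEquiv d (.inr r)) := rfl

variable {m p}

lemma mem_passingTuples {d : ℕ} {x : Fin (2 ^ d) → intRange (m : ℝ)} :
    x ∈ passingTuples m p d ↔ PassesFilters m p d fun r => x r := by
  simp [passingTuples]

lemma card_passingTuples_eq_sum (d : ℕ) :
    #(passingTuples m p d) = ∑ z ∈ intRange (m * p ^ d), passCount m p d z :=
  card_eq_sum_card_fiberwise fun _ hx =>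
    sum_mem_intRange_of_passesFilters (mem_passingTuples.1 hx)

lemma passCount_eq_zero {d : ℕ} {z : ℤ} (hz : z ∉ intRange (m * p ^ d)) :
    passCount m p d z = 0 := by
  refine card_eq_zero.2 (filter_eq_empty_iff.2 fun x hx hsum => hz ?_)
  exact hsum ▸ sum_mem_intRange_of_passesFilters (mem_passingTuples.1 hx)

lemma passCount_zero {z : ℤ} (hz : z ∈ intRange (m : ℝ)) : passCount m p 0 z = 1 := by
  rw [passCount, card_eq_one]
  refine ⟨fun _ => ⟨z, hz⟩, eq_singleton_iff_unique_mem.2 ⟨?_, fun x hx => ?_⟩⟩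
  · exact mem_filter.2 ⟨mem_passingTuples.2 (passesFilters_zero _), by simp⟩
  · funext r
    obtain rfl : r = 0 := Subsingleton.elim (α := Fin 1) r 0
    exact Subtype.ext (by simpa using (mem_filter.1 hx).2)

lemma passCount_succ (d : ℕ) {z : ℤ} (hz : z ∈ intRange (m * p ^ (d + 1))) :
    passCount m p (d + 1) z =
      ∑ a ∈ intRange (m * p ^ d), passCount m p d a * passCount m p d (z - a) := by
  have hsplit : passCount m p (d + 1) z =
      #{q ∈ passingTuples m p d ×ˢ passingTuples m p d |
        ∑ r, (q.1 r : ℤ) + ∑ r, (q.2 r : ℤ) = z} := by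
    refine card_equiv (halvesArrowEquiv _ d) fun x => ?_
    simp only [mem_filter, mem_product, mem_passingTuples, passesFilters_succ_iff,
      sum_halvesEquiv d fun r => (x r : ℤ), halvesArrowEquiv_fst, halvesArrowEquiv_snd]
    exact ⟨fun ⟨⟨hl, hr, _⟩, hsum⟩ => ⟨⟨hl, hr⟩, hsum⟩,
      fun ⟨⟨hl, hr⟩, hsum⟩ => ⟨⟨hl, hr, hsum ▸ hz⟩, hsum⟩⟩
  rw [hsplit]
  exact card_filter_add_eq_sum_mul (g := fun y : Fin (2 ^ d) → intRange (m : ℝ) => ∑ r, (y r : ℤ))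
    (fun x hx => sum_mem_intRange_of_passesFilters (mem_passingTuples.1 hx)) z

end Counting

section Bounds

/-- Iterates `B ↦ c · m p^d · B²`, the growth of `passCount` through `passCount_succ` when a
fraction `c` of its summands is nonzero. -/
def passCountBound (m : ℕ) (p c : ℝ) : ℕ → ℝ
  | 0 => 1
  | d + 1 => m * p ^ d * c * passCountBound m p c d ^ 2

variable {m : ℕ} {p X : ℝ}

lemma passCountBound_nonneg {c : ℝ} (hp : 0 ≤ p) (hc : 0 ≤ c) (d : ℕ) :
    0 ≤ passCountBound m p c d := by
  cases d <;> simp only [passCountBound] <;> positivity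

lemma mul_passCountBound (c : ℝ) (d : ℕ) :
    m * p ^ d * c * passCountBound m p c d = (m * c) ^ 2 ^ d * p ^ (2 ^ d - 1) := by
  induction d with
  | zero => simp [passCountBound]
  | succ d ih =>
    have hexp : 2 ^ (d + 1) - 1 = 2 * (2 ^ d - 1) + 1 := by
      have := Nat.one_le_two_pow (n := d)
      rw [pow_succ]
      omega
    calc (m : ℝ) * p ^ (d + 1) * c * passCountBound m p c (d + 1)
        = p * (m * p ^ d * c * passCountBound m p c d) ^ 2 := by
          rw [passCountBound]
          ring
      _ = (m * c) ^ 2 ^ (d + 1) * p ^ (2 ^ (d + 1) - 1) := by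
          rw [ih, hexp, pow_succ 2 d]
          ring

lemma passCount_bounds (hp0 : 0 ≤ p) (hp1 : p ≤ 1) (hX : 0 < X) (ha : 0 ≤ 1 - p / 2 - 1 / X)
    {d : ℕ} (hXd : X ≤ m * p ^ d) {z : ℤ} (hz : z ∈ intRange (m * p ^ d)) :
    passCountBound m p (1 - p / 2 - 1 / X) d ≤ passCount m p d z ∧
      (passCount m p d z : ℝ) ≤ passCountBound m p (1 + 1 / X) d := by
  induction d generalizing z with
  | zero =>
    rw [passCount_zero (by simpa using hz)]
    simp [passCountBound]
  | succ d ih =>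
    set s : ℝ := m * p ^ d
    have hps : (m : ℝ) * p ^ (d + 1) = s * p := by rw [pow_succ]; ring
    have hs0 : 0 ≤ s := by positivity
    have hXs : X ≤ s := hXd.trans (by rw [hps]; exact mul_le_of_le_one_right hs0 hp1)
    have hsX : 1 ≤ s / X := (one_le_div hX).2 hXs
    have hrec : (passCount m p (d + 1) z : ℝ) =
        ∑ a ∈ intRange s, (passCount m p d a : ℝ) * passCount m p d (z - a) := by
      rw [passCount_succ d hz]
      push_cast
      rfl
    have hf0 : ∀ a, (0 : ℝ) ≤ passCount m p d a := fun a => Nat.cast_nonneg _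
    constructor
    · have hcount : s * (1 - p / 2 - 1 / X) ≤ #{a ∈ intRange s | z - a ∈ intRange s} := by
        have := lt_card_filter_sub_mem_intRange (s := s)
          (by rw [hps]; exact mul_le_of_le_one_right hs0 hp1) hz
        have : s * (1 - p / 2 - 1 / X) = s - s * p / 2 - s / X := by ring
        linarith
      calc passCountBound m p (1 - p / 2 - 1 / X) (d + 1)
          = s * (1 - p / 2 - 1 / X) * passCountBound m p (1 - p / 2 - 1 / X) d ^ 2 := rfl
        _ ≤ #{a ∈ intRange s | z - a ∈ intRange s} *
              passCountBound m p (1 - p / 2 - 1 / X) d ^ 2 :=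
          mul_le_mul_of_nonneg_right hcount (sq_nonneg _)
        _ ≤ _ := le_sum_mul_sub hf0 (passCountBound_nonneg hp0 ha d)
              (fun a ha => (ih hXs ha).1) z
        _ = passCount m p (d + 1) z := hrec.symm
    · have hcard : (#(intRange s) : ℝ) ≤ s * (1 + 1 / X) := by
        have := card_intRange_le hs0
        have : s * (1 + 1 / X) = s + s / X := by ring
        linarith
      calc (passCount m p (d + 1) z : ℝ)
          = ∑ a ∈ intRange s, (passCount m p d a : ℝ) * passCount m p d (z - a) := hrec
        _ ≤ #(intRange s) * passCountBound m p (1 + 1 / X) d ^ 2 :=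
          sum_mul_sub_le hf0 (fun a ha => (ih hXs ha).2)
            (fun a ha => by rw [passCount_eq_zero ha, Nat.cast_zero]) z
        _ ≤ s * (1 + 1 / X) * passCountBound m p (1 + 1 / X) d ^ 2 :=
          mul_le_mul_of_nonneg_right hcard (sq_nonneg _)
        _ = passCountBound m p (1 + 1 / X) (d + 1) := rfl

lemma card_passingTuples_bounds (hp0 : 0 ≤ p) (hp1 : p ≤ 1) (hX : 0 < X)
    (ha : 0 ≤ 1 - p / 2 - 1 / X) {d : ℕ} (hXd : X ≤ m * p ^ d) :
    (m * (1 - p / 2 - 1 / X)) ^ 2 ^ d * p ^ (2 ^ d - 1) ≤ #(passingTuples m p d) ∧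
      (#(passingTuples m p d) : ℝ) ≤ (m * (1 + 1 / X)) ^ 2 ^ d * p ^ (2 ^ d - 1) := by
  set s : ℝ := m * p ^ d
  have hs0 : 0 ≤ s := by positivity
  have hsX : 1 ≤ s / X := (one_le_div hX).2 hXd
  have hbounds := fun z (hz : z ∈ intRange s) => passCount_bounds hp0 hp1 hX ha hXd hz
  rw [← mul_passCountBound, ← mul_passCountBound, card_passingTuples_eq_sum, Nat.cast_sum]
  constructor
  · have hcard : s * (1 - p / 2 - 1 / X) ≤ #(intRange s) := by
      have := lt_card_intRange hs0
      have : s * (1 - p / 2 - 1 / X) = s - s * p / 2 - s / X := by ring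
      nlinarith
    calc s * (1 - p / 2 - 1 / X) * passCountBound m p (1 - p / 2 - 1 / X) d
        ≤ #(intRange s) • passCountBound m p (1 - p / 2 - 1 / X) d := by
          rw [nsmul_eq_mul]
          exact mul_le_mul_of_nonneg_right hcard (passCountBound_nonneg hp0 ha d)
      _ ≤ ∑ z ∈ intRange s, (passCount m p d z : ℝ) :=
          card_nsmul_le_sum _ _ _ fun z hz => (hbounds z hz).1
  · have hcard : (#(intRange s) : ℝ) ≤ s * (1 + 1 / X) := by
      have := card_intRange_le hs0
      have : s * (1 + 1 / X) = s + s / X := by ring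
      linarith
    calc ∑ z ∈ intRange s, (passCount m p d z : ℝ)
        ≤ #(intRange s) • passCountBound m p (1 + 1 / X) d :=
          sum_le_card_nsmul _ _ _ fun z hz => (hbounds z hz).2
      _ ≤ s * (1 + 1 / X) * passCountBound m p (1 + 1 / X) d := by
          rw [nsmul_eq_mul]
          exact mul_le_mul_of_nonneg_right hcard
            (passCountBound_nonneg hp0 (by positivity) d)

end Bounds

section Expectation

variable (m : ℕ) (p : ℝ)

open scoped Classical in
noncomputable def passProb (d : ℕ) : ℝ :=
  𝔼 x : Fin (2 ^ d) → intRange (m : ℝ), if PassesFilters m p d (fun r => x r) then 1 else 0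

variable {m p}

instance : Nonempty (intRange (m : ℝ)) := ⟨⟨0, zero_mem_intRange m.cast_nonneg⟩⟩

lemma passProb_eq (d : ℕ) :
    passProb m p d = #(passingTuples m p d) / (#(intRange (m : ℝ)) : ℝ) ^ 2 ^ d := by
  classical
  rw [passProb, Fintype.expect_eq_sum_div_card, sum_boole, Fintype.card_fun, Fintype.card_fin,
    Fintype.card_coe]
  simp [passingTuples]

lemma blockIdx_injective {κ d : ℕ} (hd : d ≤ κ) (i : Fin (2 ^ (κ - d))) :
    Function.Injective (blockIdx d hd i) := fun r s h => by
  simp only [blockIdx, Fin.mk.injEq] at h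
  exact Fin.ext (by omega)

lemma expect_levelListSize (κ n : ℕ) {d : ℕ} (hd : d ≤ κ) (i : Fin (2 ^ (κ - d))) :
    𝔼 L : Fin (2 ^ κ) → Fin n → intRange (m : ℝ),
        (levelListSize κ n m p (fun u j => L u j) d hd i : ℝ) = n ^ 2 ^ d * passProb m p d := by
  classical
  have hsum : ∀ L : Fin (2 ^ κ) → Fin n → intRange (m : ℝ),
      (levelListSize κ n m p (fun u j => L u j) d hd i : ℝ) =
        ∑ ℓ : Fin (2 ^ d) → Fin n,
          if PassesFilters m p d (fun r => L (blockIdx d hd i r) (ℓ r)) then 1 else 0 := by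
    intro L
    rw [levelListSize_eq, Nat.card_eq_fintype_card, Fintype.card_subtype, natCast_card_filter]
  have hterm : ∀ ℓ : Fin (2 ^ d) → Fin n,
      𝔼 L : Fin (2 ^ κ) → Fin n → intRange (m : ℝ),
        (if PassesFilters m p d (fun r => L (blockIdx d hd i r) (ℓ r)) then 1 else 0 : ℝ) =
        passProb m p d := by
    intro ℓ
    have he : Function.Injective fun r => (blockIdx d hd i r, ℓ r) :=
      fun r s h => blockIdx_injective hd i (Prod.ext_iff.1 h).1
    calc _ = 𝔼 F : Fin (2 ^ κ) × Fin n → intRange (m : ℝ),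
          if PassesFilters m p d (fun r => (F ∘ fun r => (blockIdx d hd i r, ℓ r)) r)
          then (1 : ℝ) else 0 :=
          Fintype.expect_equiv (Equiv.curry _ _ _).symm _ _ fun L => rfl
      _ = passProb m p d := by
          rw [passProb]
          exact Fintype.expect_comp_of_injective (α := intRange (m : ℝ)) he
            fun x => if PassesFilters m p d (fun r => x r) then (1 : ℝ) else 0
  simp_rw [hsum]
  rw [expect_sum_comm]
  simp_rw [hterm]
  simp

lemma expTotalSize_eq (κ n : ℕ) :
    expTotalSize κ n m p =
      ∑ d ∈ range (κ + 1), (2 : ℝ) ^ (κ - d) * n ^ 2 ^ d * passProb m p d := by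
  rw [expTotalSize, ← Fintype.expect_eq_sum_div_card]
  simp only [totalSize, Nat.cast_sum]
  rw [expect_sum_comm]
  simp_rw [expect_sum_comm, expect_levelListSize]
  rw [← sum_attach (range (κ + 1))]
  simp [mul_assoc]

end Expectation

section Estimates

variable {m κ : ℕ} {p X : ℝ}

lemma passProb_zero : passProb m p 0 = 1 := by
  simp [passProb, passesFilters_zero]

lemma passProb_nonneg (d : ℕ) : 0 ≤ passProb m p d := by
  rw [passProb_eq]
  positivity

lemma passProb_bounds (hp0 : 0 ≤ p) (hp1 : p ≤ 1) (hX : 0 < X) (ha : 0 ≤ 1 - p / 2 - 1 / X)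
    {d : ℕ} (hXd : X ≤ m * p ^ d) :
    ((1 - p / 2 - 1 / X) / (1 + 1 / X)) ^ 2 ^ d * p ^ (2 ^ d - 1) ≤ passProb m p d ∧
      passProb m p d ≤ (1 + 1 / X) ^ 2 ^ d * p ^ (2 ^ d - 1) := by
  have hXm : X ≤ m := hXd.trans (mul_le_of_le_one_right m.cast_nonneg (pow_le_one₀ hp0 hp1))
  have hmX : 1 ≤ m / X := (one_le_div hX).2 hXm
  have hmN : (m : ℝ) ≤ #(intRange (m : ℝ)) := by exact_mod_cast le_card_intRange m
  have hNm : (#(intRange (m : ℝ)) : ℝ) ≤ m * (1 + 1 / X) := by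
    have := card_intRange_le m.cast_nonneg
    have : (m : ℝ) * (1 + 1 / X) = m + m / X := by ring
    linarith
  have hm0 : (0 : ℝ) < m := hX.trans_le hXm
  have hN0 : (0 : ℝ) < #(intRange (m : ℝ)) := hm0.trans_le hmN
  have hb0 : (0 : ℝ) < 1 + 1 / X := by positivity
  obtain ⟨hlow, hupp⟩ := card_passingTuples_bounds hp0 hp1 hX ha hXd
  rw [passProb_eq]
  constructor
  · rw [le_div_iff₀ (by positivity)]
    refine le_trans ?_ hlow
    rw [mul_right_comm, ← mul_pow]
    refine mul_le_mul_of_nonneg_right (pow_le_pow_left₀ (by positivity) ?_ _) (by positivity)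
    rw [div_mul_eq_mul_div, div_le_iff₀ hb0, mul_comm (m : ℝ), mul_assoc]
    exact mul_le_mul_of_nonneg_left hNm ha
  · rw [div_le_iff₀ (by positivity)]
    refine hupp.trans ?_
    rw [mul_right_comm, mul_pow, mul_comm ((m : ℝ) ^ 2 ^ d)]
    gcongr

lemma two_pow_pred_le {d κ : ℕ} (hd1 : 1 ≤ d) (hd : d ≤ κ) : 2 ^ (d - 1) ≤ 2 ^ κ - 1 := by
  have : 2 ^ (d - 1) < 2 ^ κ := Nat.pow_lt_pow_right one_lt_two (by omega)
  omega

lemma two_pow_eq_two_mul {d : ℕ} (hd1 : 1 ≤ d) : 2 ^ d = 2 * 2 ^ (d - 1) := by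
  rw [← pow_succ']
  congr 1
  omega

lemma passProb_bounds_of_le (hp0 : 0 < p) (hp : p < 1 / 30) (hX : 30 < m * p ^ κ) {d : ℕ}
    (hd : d ≤ κ) :
    ((1 - p / 2 - 1 / (m * p ^ κ)) / (1 + 1 / (m * p ^ κ))) ^ 2 ^ d * p ^ (2 ^ d - 1) ≤
        passProb m p d ∧
      passProb m p d ≤ (1 + 1 / (m * p ^ κ)) ^ 2 ^ d * p ^ (2 ^ d - 1) := by
  have ha : 0 ≤ 1 - p / 2 - 1 / (m * p ^ κ) := by
    have : 1 / ((m : ℝ) * p ^ κ) < 1 / 30 := by gcongr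
    linarith
  refine passProb_bounds hp0.le (by linarith) (by linarith) ha ?_
  exact mul_le_mul_of_nonneg_left (pow_le_pow_of_le_one hp0.le (by linarith) hd) m.cast_nonneg

lemma passProb_le (hp0 : 0 < p) (hp : p < 1 / 30) (hX : 30 < m * p ^ κ) {d : ℕ} (hd : d ≤ κ) :
    passProb m p d ≤
      p ^ (2 ^ d - 1) * ((1 + p) ^ (2 ^ κ - 1) * (1 + 35 / (m * p ^ κ)) ^ (2 ^ κ - 1)) := by
  have hupp := (passProb_bounds_of_le hp0 hp hX hd).2
  set X : ℝ := m * p ^ κ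
  have hX0 : 0 < X := by linarith
  have hK : 1 ≤ (1 + p) ^ (2 ^ κ - 1) := one_le_pow₀ (by linarith)
  have h35 : 1 ≤ 1 + 35 / X := le_add_of_nonneg_right (by positivity)
  have hK' : 1 ≤ (1 + 35 / X) ^ (2 ^ κ - 1) := one_le_pow₀ h35
  obtain rfl | hd1 := Nat.eq_zero_or_pos d
  · rw [passProb_zero, pow_zero, Nat.sub_self, pow_zero, one_mul]
    exact one_le_mul_of_one_le_of_one_le hK hK'
  have hsq : (1 + 1 / X) ^ 2 ≤ 1 + 35 / X := by
    have hq : 1 / X ≤ 33 := by rw [div_le_iff₀ hX0]; linarith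
    have : 35 / X = 35 * (1 / X) := by ring
    rw [this]
    nlinarith [div_pos one_pos hX0]
  calc passProb m p d ≤ (1 + 1 / X) ^ 2 ^ d * p ^ (2 ^ d - 1) := hupp
    _ = p ^ (2 ^ d - 1) * ((1 + 1 / X) ^ 2) ^ 2 ^ (d - 1) := by
        rw [← pow_mul, ← two_pow_eq_two_mul hd1, mul_comm]
    _ ≤ p ^ (2 ^ d - 1) * (1 * (1 + 35 / X) ^ (2 ^ κ - 1)) := by
        rw [one_mul]
        gcongr
        calc ((1 + 1 / X) ^ 2) ^ 2 ^ (d - 1) ≤ (1 + 35 / X) ^ 2 ^ (d - 1) := by gcongr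
          _ ≤ (1 + 35 / X) ^ (2 ^ κ - 1) := pow_le_pow_right₀ h35 (two_pow_pred_le hd1 hd)
    _ ≤ p ^ (2 ^ d - 1) * ((1 + p) ^ (2 ^ κ - 1) * (1 + 35 / X) ^ (2 ^ κ - 1)) := by
        gcongr

lemma le_passProb (hp0 : 0 < p) (hp : p < 1 / 30) (hX : 30 < m * p ^ κ) {d : ℕ} (hd : d ≤ κ) :
    p ^ (2 ^ d - 1) * ((1 - p) ^ (2 ^ κ - 1) * (1 - 35 / (m * p ^ κ)) ^ (2 ^ κ - 1)) ≤
      passProb m p d := by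
  have hlow := (passProb_bounds_of_le hp0 hp hX hd).1
  set X : ℝ := m * p ^ κ
  have hX0 : 0 < X := by linarith
  rw [← mul_pow]
  set c := (1 - p) * (1 - 35 / X) with hc_def
  have hc1 : |c| ≤ 1 := by
    have : 35 / X < 35 / 30 := by gcongr
    have : 0 < 35 / X := by positivity
    rw [abs_mul]
    exact mul_le_one₀ (abs_le.2 ⟨by linarith, by linarith⟩) (abs_nonneg _)
      (abs_le.2 ⟨by linarith, by linarith⟩)
  obtain rfl | hd1 := Nat.eq_zero_or_pos d
  · rw [passProb_zero, pow_zero, Nat.sub_self, pow_zero, one_mul]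
    exact (le_abs_self _).trans (by rw [abs_pow]; exact pow_le_one₀ (abs_nonneg c) hc1)
  -- For `X < 35` the base `c` is negative, but the exponent `2^κ - 1` is odd.
  obtain hc | hc0 := lt_or_ge c 0
  · have hodd : Odd (2 ^ κ - 1) := Nat.Even.sub_odd Nat.one_le_two_pow
      (Nat.even_pow.2 ⟨even_two, by omega⟩) odd_one
    exact (mul_nonpos_of_nonneg_of_nonpos (by positivity) (hodd.pow_nonpos hc.le)).trans
      (passProb_nonneg d)
  have hkey : c ≤ ((1 - p / 2 - 1 / X) / (1 + 1 / X)) ^ 2 := by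
    rw [div_pow, le_div_iff₀ (by positivity), mul_comm]
    have : 35 / X = 35 * (1 / X) := by ring
    rw [hc_def, this]
    have hq0 : 0 ≤ 1 / X := by positivity
    nlinarith [mul_nonneg hq0 hq0, sq_nonneg p, mul_nonneg (mul_nonneg hq0 hq0) hq0]
  calc p ^ (2 ^ d - 1) * c ^ (2 ^ κ - 1) ≤ p ^ (2 ^ d - 1) * c ^ 2 ^ (d - 1) :=
        mul_le_mul_of_nonneg_left (pow_le_pow_of_le_one hc0 ((le_abs_self c).trans hc1)
          (two_pow_pred_le hd1 hd)) (by positivity)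
    _ ≤ p ^ (2 ^ d - 1) * (((1 - p / 2 - 1 / X) / (1 + 1 / X)) ^ 2) ^ 2 ^ (d - 1) := by
        gcongr
    _ = ((1 - p / 2 - 1 / X) / (1 + 1 / X)) ^ 2 ^ d * p ^ (2 ^ d - 1) := by
        rw [← pow_mul, ← two_pow_eq_two_mul hd1, mul_comm]
    _ ≤ passProb m p d := hlow

end Estimates

lemma two_pow_mul_div_two_pow_eq {κ d : ℕ} (hd : d ≤ κ) (n p : ℝ) :
    2 ^ κ * n * ((n * p) ^ (2 ^ d - 1) / 2 ^ d) = 2 ^ (κ - d) * n ^ 2 ^ d * p ^ (2 ^ d - 1) := by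
  have h2 : (2 : ℝ) ^ κ = 2 ^ (κ - d) * 2 ^ d := by rw [← pow_add, Nat.sub_add_cancel hd]
  have hn : n ^ 2 ^ d = n * n ^ (2 ^ d - 1) := by
    rw [← pow_succ', Nat.sub_add_cancel Nat.one_le_two_pow]
  rw [h2, hn, mul_pow]
  field_simp

lemma two_pow_mul_one_add_sum_eq (κ n : ℕ) (p A B : ℝ) :
    (2 ^ κ : ℝ) * n * (1 + ∑ d ∈ Icc 1 κ, ((n : ℝ) * p) ^ (2 ^ d - 1) / (2 : ℝ) ^ d) * A * B =
      ∑ d ∈ range (κ + 1), (2 : ℝ) ^ (κ - d) * n ^ 2 ^ d * (p ^ (2 ^ d - 1) * (A * B)) := by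
  have hrange : range (κ + 1) = insert 0 (Icc 1 κ) := by
    ext d
    simp only [mem_range, mem_insert, mem_Icc]
    omega
  rw [hrange, sum_insert (by simp), mul_assoc, mul_add, mul_one, add_mul, mul_sum, sum_mul]
  congr 1
  · simp [mul_assoc]
  · refine sum_congr rfl fun d hd => ?_
    rw [two_pow_mul_div_two_pow_eq (mem_Icc.1 hd).2, mul_assoc]

theorem kTree_total_size_bounds_general
    (κ n m : ℕ)
    (p : ℝ) (hp0 : 0 < p)
    (h3 : (30 : ℝ) < (m : ℝ) * p ^ κ)
    (h4 : p < 1 / 30) :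
    (2 ^ κ : ℝ) * n * (1 + ∑ d ∈ Finset.Icc 1 κ, ((n : ℝ) * p) ^ (2 ^ d - 1) / (2 : ℝ) ^ d) *
        (1 - p) ^ (2 ^ κ - 1) * (1 - 35 / ((m : ℝ) * p ^ κ)) ^ (2 ^ κ - 1)
      ≤ expTotalSize κ n m p ∧
    expTotalSize κ n m p
      ≤ (2 ^ κ : ℝ) * n * (1 + ∑ d ∈ Finset.Icc 1 κ, ((n : ℝ) * p) ^ (2 ^ d - 1) / (2 : ℝ) ^ d) *
        (1 + p) ^ (2 ^ κ - 1) * (1 + 35 / ((m : ℝ) * p ^ κ)) ^ (2 ^ κ - 1) := by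
  rw [expTotalSize_eq, two_pow_mul_one_add_sum_eq, two_pow_mul_one_add_sum_eq]
  constructor <;> refine sum_le_sum fun d hd => mul_le_mul_of_nonneg_left ?_ (by positivity)
  · exact le_passProb hp0 h4 h3 (Nat.lt_succ_iff.1 (mem_range.1 hd))
  · exact passProb_le hp0 h4 h3 (Nat.lt_succ_iff.1 (mem_range.1 hd))

theorem kTree_total_size_bounds
    (κ n m : ℕ) (hκ : 1 ≤ κ) (hn : 0 < n) (hm : 0 < m)
    (p : ℝ) (hp0 : 0 < p) (hp1 : p ≤ 1)
    (h1 : (7 : ℝ) * 2 ^ κ < m)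
    (h2 : ((7 : ℝ) / m) ^ (2 ^ (κ - 1) - 1) < p * 2 ^ κ)
    (h3 : (30 : ℝ) < (m : ℝ) * p ^ κ)
    (h4 : p < 1 / 30) :
    (2 ^ κ : ℝ) * n * (1 + ∑ d ∈ Finset.Icc 1 κ, ((n : ℝ) * p) ^ (2 ^ d - 1) / (2 : ℝ) ^ d) *
        (1 - p) ^ (2 ^ κ - 1) * (1 - 35 / ((m : ℝ) * p ^ κ)) ^ (2 ^ κ - 1)
      ≤ expTotalSize κ n m p ∧
    expTotalSize κ n m p
      ≤ (2 ^ κ : ℝ) * n * (1 + ∑ d ∈ Finset.Icc 1 κ, ((n : ℝ) * p) ^ (2 ^ d - 1) / (2 : ℝ) ^ d) *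
        (1 + p) ^ (2 ^ κ - 1) * (1 + 35 / ((m : ℝ) * p ^ κ)) ^ (2 ^ κ - 1) :=
  kTree_total_size_bounds_general κ n m p hp0 h3 h4
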